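/- Given cost vectors c_1,...,c_N ∈ ℝ^{n²} and variables x_1,...,x_N ∈ ℝ^{n²}, define E_i = L̃_{*,i} c_i^T where L̃_{*,i} is the i-th column of the truncated Laplacian L̃ of a connected graph. Then Σ_{i=1}^N E_i x_i = 0 if and only if c_1^T x_1 = c_2^T x_2 = ... = c_N^T x_N, i.e., the equitable constraint holds. -/

import Mathlib

open Matrix

/- The Laplacian has zero column sums (it is symmetric with zero row sums), so the coordinates of
`L v` always sum to zero and any `N - 1` of them determine the last; hence the truncated system
`L̃ v = 0` is equivalent to `L v = 0`. For a connected graph the kernel of `L` consists of the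
constant vectors, and `v i = cᵢᵀ xᵢ`. -/

theorem Fin.eq_zero_of_sum_eq_zero_of_apply_castLE_eq_zero {M : Type*} [AddCommMonoid M] {N : ℕ}
    (f : Fin N → M) (hsum : ∑ i, f i = 0)
    (h : ∀ r : Fin (N - 1), f (Fin.castLE (Nat.sub_le N 1) r) = 0) : f = 0 := by
  have h' : ∀ j : Fin N, (j : ℕ) < N - 1 → f j = 0 := fun j hj => h ⟨j, hj⟩
  funext j
  by_cases hj : (j : ℕ) < N - 1
  · exact h' j hj
  · rw [Pi.zero_apply, ← hsum, Finset.sum_eq_single j]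
    · intro i _ hij
      exact h' i (by have := Fin.val_ne_of_ne hij; omega)
    · simp

namespace SimpleGraph

variable {V : Type*} [Fintype V] [DecidableEq V] (G : SimpleGraph V) [DecidableRel G.Adj]

theorem sum_lapMatrix_mulVec {R : Type*} [CommRing R] (v : V → R) :
    ∑ i, (G.lapMatrix R *ᵥ v) i = 0 := by
  rw [← one_dotProduct, dotProduct_mulVec, ← (G.isSymm_lapMatrix (R := R)).eq, vecMul_transpose]
  exact (congrArg (· ⬝ᵥ v) G.lapMatrix_mulVec_const_eq_zero).trans (zero_dotProduct v)

theorem lapMatrix_mulVec_eq_zero_iff_of_connected (hG : G.Connected) {v : V → ℝ} :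
    G.lapMatrix ℝ *ᵥ v = 0 ↔ ∀ i j, v i = v j := by
  rw [lapMatrix_mulVec_eq_zero_iff_forall_reachable]
  exact ⟨fun h i j => h i j (hG.preconnected i j), fun h i j _ => h i j⟩

end SimpleGraph

theorem stmt6_general (N n : ℕ) (G : SimpleGraph (Fin N)) [DecidableRel G.Adj]
    (hG : G.Connected)
    (Ltil : Matrix (Fin (N-1)) (Fin N) ℝ)
    (hL : ∀ (i : Fin (N-1)) (j : Fin N),
      Ltil i j = (Matrix.diagonal (fun k => (G.degree k : ℝ)) - G.adjMatrix ℝ)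
        (Fin.castLE (Nat.sub_le N 1) i) j)
    (c x : Fin N → Fin (n^2) → ℝ) :
    (∀ r : Fin (N-1), ∑ i, Ltil r i * (∑ j, c i j * x i j) = 0) ↔
      ∀ k l : Fin N, (∑ j, c k j * x k j) = ∑ j, c l j * x l j := by
  refine Iff.trans ?_ (G.lapMatrix_mulVec_eq_zero_iff_of_connected hG)
  have hLtil (r : Fin (N - 1)) : ∑ i, Ltil r i * (∑ j, c i j * x i j) =
      (G.lapMatrix ℝ *ᵥ fun i => ∑ j, c i j * x i j) (Fin.castLE (Nat.sub_le N 1) r) := by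
    simp only [hL]
    rfl
  simp only [hLtil]
  exact ⟨Fin.eq_zero_of_sum_eq_zero_of_apply_castLE_eq_zero _ (G.sum_lapMatrix_mulVec _),
    fun h r => congrFun h _⟩

/-- With `Eᵢ = L̃₍*,i₎ cᵢᵀ`, we have `∑ i, Eᵢ xᵢ = 0` iff all the costs
`cᵢᵀ xᵢ` are equal (the equitable constraint). -/
theorem stmt6 (N n : ℕ) (hN : 2 ≤ N) (G : SimpleGraph (Fin N)) [DecidableRel G.Adj]
    (hG : G.Connected)
    (Ltil : Matrix (Fin (N-1)) (Fin N) ℝ)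
    (hL : ∀ (i : Fin (N-1)) (j : Fin N),
      Ltil i j = (Matrix.diagonal (fun k => (G.degree k : ℝ)) - G.adjMatrix ℝ)
        (Fin.castLE (Nat.sub_le N 1) i) j)
    (c x : Fin N → Fin (n^2) → ℝ) :
    (∀ r : Fin (N-1), ∑ i, Ltil r i * (∑ j, c i j * x i j) = 0) ↔
      ∀ k l : Fin N, (∑ j, c k j * x k j) = ∑ j, c l j * x l j :=
  stmt6_general N n G hG Ltil hL c x
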